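/- Let X_∞ = 2^(ℕ^{<ℕ}) with the S_∞-action (g·x)(s_0,…,s_{n-1}) = x(g⁻¹(s_0),…,g⁻¹(s_{n-1})). This action of S_∞ on the compact space X_∞ is continuous, and X_∞ is a universal Borel S_∞-space. -/

import Mathlib

/-- The Polish group `S_∞` is the group of permutations of `ℕ` with the
topology inherited from Baire space `ℕ^ℕ`. -/
def permTopology : TopologicalSpace (Equiv.Perm ℕ) :=
  TopologicalSpace.induced (fun g => (g : ℕ → ℕ)) Pi.topologicalSpace

/-- The shift action of `S_∞` on `X_∞ = 2^(ℕ^{<ℕ})`: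
`(g·x)(s₀,…,s_{n-1}) = x(g⁻¹ s₀, …, g⁻¹ s_{n-1})`. -/
def infAction (g : Equiv.Perm ℕ) (x : List ℕ → Bool) : List ℕ → Bool :=
  fun s => x (s.map (g⁻¹ : Equiv.Perm ℕ))

/-! Continuity holds because the coordinate `s` of `g • x` only involves the finitely many values
`g⁻¹ sᵢ` and one coordinate of `x`. Universality is the Becker–Kechris argument: fix Borel sets
`B n` separating the points of `X` and code `x` by its membership in the Vaught transforms
`(B n)^{Δ N_t}` over the basic clopen sets `N_t` of `S_∞`. These are Borel by a
Kuratowski–Ulam-type argument, and `g N_t = N_{g t}` makes the coding equivariant. For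
injectivity, a Baire-measurable `P ⊆ S_∞` agrees up to a meagre set with the union of the
`N_t` in which it is comeagre; so if `x` and `y` have the same code, a generic `g` satisfies
`g⁻¹ • x ∈ B n ↔ g⁻¹ • y ∈ B n` for every `n`, whence `x = y`. -/

open Set Filter Topology TopologicalSpace

section BaireCategory

variable {G : Type*} [TopologicalSpace G]

lemma isMeagre_diff_iff_eventuallyLE {s t : Set G} : IsMeagre (s \ t) ↔ s ≤ᶠ[residual G] t := by
  simp only [IsMeagre, EventuallyLE, Filter.Eventually, compl_sdiff]
  congr!
  ext x
  simp only [mem_union, mem_compl_iff, mem_ofPred_eq, le_Prop_eq]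
  tauto

lemma Homeomorph.isMeagre_preimage {H : Type*} [TopologicalSpace H] (e : G ≃ₜ H) {s : Set H} :
    IsMeagre (e ⁻¹' s) ↔ IsMeagre s := by
  refine ⟨fun h => ?_, fun h => h.preimage_of_isOpenMap e.continuous e.isOpenMap⟩
  simpa [← preimage_comp] using h.preimage_of_isOpenMap e.symm.continuous e.symm.isOpenMap

variable {ι : Type*} {V : ι → Set G}

def comeagreInterior (V : ι → Set G) (P : Set G) : Set G :=
  ⋃ (i) (_ : IsMeagre (V i \ P)), V i

variable [Countable ι]

lemma comeagreInterior_eventuallyLE (V : ι → Set G) (P : Set G) :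
    comeagreInterior V P ≤ᶠ[residual G] P := by
  rw [← isMeagre_diff_iff_eventuallyLE, comeagreInterior]
  simp only [iUnion_sdiff]
  exact isMeagre_iUnion fun i => isMeagre_iUnion id

theorem BaireMeasurableSet.residualEq_comeagreInterior (hV : IsTopologicalBasis (range V))
    {P : Set G} (hP : BaireMeasurableSet P) : P =ᵇ comeagreInterior V P := by
  obtain ⟨U, hU, hPU⟩ := hP.residualEq_isOpen
  have hUP : U ⊆ comeagreInterior V P := fun g hg => by
    obtain ⟨_, ⟨i, rfl⟩, hgi, hiU⟩ := hV.exists_subset_of_mem_open hg hU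
    refine mem_iUnion₂.2 ⟨i, ?_, hgi⟩
    exact isMeagre_diff_iff_eventuallyLE.2 (hiU.eventuallyLE.trans hPU.symm.le)
  exact (hPU.le.trans hUP.eventuallyLE).antisymm (comeagreInterior_eventuallyLE V P)

theorem BaireMeasurableSet.isMeagre_inter_iff [BaireSpace G] (hV : IsTopologicalBasis (range V))
    {S U : Set G} (hS : BaireMeasurableSet S) (hU : IsOpen U) :
    IsMeagre (U ∩ S) ↔ ∀ i, IsMeagre (V i \ S) → Disjoint (V i) U := by
  refine ⟨fun hUS i hi => ?_, fun h => ?_⟩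
  · rw [disjoint_iff_inter_eq_empty, ← not_nonempty_iff_eq_empty]
    refine fun hne => not_isMeagre_of_isOpen ((hV.isOpen ⟨i, rfl⟩).inter hU) hne ?_
    refine (hi.union hUS).mono fun g hg => ?_
    by_cases hgS : g ∈ S
    exacts [Or.inr ⟨hg.2, hgS⟩, Or.inl ⟨hg.1, hgS⟩]
  · have hdisj : U ∩ comeagreInterior V S = ∅ := by
      simp only [comeagreInterior, inter_iUnion, iUnion_eq_empty]
      exact fun i hi => (h i hi).symm.inter_eq
    have : IsMeagre (S \ comeagreInterior V S) :=
      isMeagre_diff_iff_eventuallyLE.2 (hS.residualEq_comeagreInterior hV).le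
    refine this.mono fun g hg => ?_
    exact ⟨hg.2, fun hgR => hdisj.subset ⟨hg.1, hgR⟩⟩

theorem MeasurableSet.measurable_isMeagre_inter_section [BaireSpace G] [MeasurableSpace G]
    [BorelSpace G] {X : Type*} [MeasurableSpace X] (hV : IsTopologicalBasis (range V))
    {A : Set (G × X)} (hA : MeasurableSet A) (i : ι) :
    Measurable fun x => IsMeagre (V i ∩ {g | (g, x) ∈ A}) := by
  rw [← generateFrom_prod] at hA
  induction A, hA using MeasurableSpace.generateFrom_induction generalizing i with
  | hC A hA =>
    obtain ⟨s, -, t, ht, rfl⟩ := hA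
    have : (fun x => IsMeagre (V i ∩ {g | (g, x) ∈ s ×ˢ t})) =
        fun x => x ∈ t → IsMeagre (V i ∩ s) := by
      ext x
      by_cases hx : x ∈ t <;> simp [hx, IsMeagre.empty]
    rw [this]
    exact ht.mem.imp measurable_const
  | empty => simp [IsMeagre.empty]
  | compl A hA ih =>
    rw [generateFrom_prod] at hA
    have hsec : ∀ x, BaireMeasurableSet {g | (g, x) ∈ A} := fun x =>
      (measurable_prodMk_right hA).baireMeasurableSet
    have : (fun x => IsMeagre (V i ∩ {g | (g, x) ∈ Aᶜ})) =
        fun x => ∀ j, IsMeagre (V j ∩ {g | (g, x) ∈ A}) → Disjoint (V j) (V i) := by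
      ext x
      have := (hsec x).compl.isMeagre_inter_iff hV (hV.isOpen ⟨i, rfl⟩)
      simp only [sdiff_compl] at this
      exact this
    rw [this]
    exact Measurable.forall fun j => (ih j).imp measurable_const
  | iUnion A _ ih =>
    have : (fun x => IsMeagre (V i ∩ {g | (g, x) ∈ ⋃ n, A n})) =
        fun x => ∀ n, IsMeagre (V i ∩ {g | (g, x) ∈ A n}) := by
      ext x
      rw [show {g | (g, x) ∈ ⋃ n, A n} = ⋃ n, {g | (g, x) ∈ A n} by ext; simp, inter_iUnion]
      exact ⟨fun h n => h.mono (subset_iUnion_of_subset n subset_rfl), isMeagre_iUnion⟩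
    rw [this]
    exact Measurable.forall fun n => ih n i

end BaireCategory

section VaughtTransform

open scoped Pointwise

variable {G X : Type*} [Group G] [TopologicalSpace G] [MulAction G X]

-- Kechris's `B^{ΔU}`: the points `x` with `g⁻¹ • x ∈ B` for comeagre many `g ∈ U`.
def vaughtTransform (B : Set X) (U : Set G) : Set X :=
  {x | IsMeagre (U \ {g | g⁻¹ • x ∈ B})}

theorem smul_mem_vaughtTransform_iff [ContinuousConstSMul G G]
    {B : Set X} {U : Set G} (h : G) (x : X) :
    h • x ∈ vaughtTransform B U ↔ x ∈ vaughtTransform B (h⁻¹ • U) := by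
  have : (h • ·) ⁻¹' (U \ {g | g⁻¹ • h • x ∈ B}) = h⁻¹ • U \ {g : G | g⁻¹ • x ∈ B} := by
    ext g
    simp [mem_inv_smul_set_iff, mul_smul]
  rw [vaughtTransform, mem_ofPred_eq, ← (Homeomorph.smul h).isMeagre_preimage]
  exact iff_of_eq (congrArg IsMeagre this)

variable [BaireSpace G] [MeasurableSpace G] [BorelSpace G] [MeasurableInv G]
  [MeasurableSpace X] {ι : Type*} [Countable ι] {V : ι → Set G}

theorem measurableSet_vaughtTransform [MeasurableSMul₂ G X] (hV : IsTopologicalBasis (range V))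
    {B : Set X} (hB : MeasurableSet B) (i : ι) : MeasurableSet (vaughtTransform B (V i)) :=
  measurableSet_setOfPred.2 <|
    ((measurable_fst.inv.smul measurable_snd) hB).compl.measurable_isMeagre_inter_section hV i

theorem eq_of_forall_mem_vaughtTransform_iff [MeasurableSMul G X]
    (hV : IsTopologicalBasis (range V)) {B : ℕ → Set X} (hB : ∀ n, MeasurableSet (B n))
    (hsep : ∀ x y, (∀ n, x ∈ B n ↔ y ∈ B n) → x = y) {x y : X}
    (h : ∀ n i, x ∈ vaughtTransform (B n) (V i) ↔ y ∈ vaughtTransform (B n) (V i)) : x = y := by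
  let P (z : X) (n : ℕ) : Set G := {g | g⁻¹ • z ∈ B n}
  have hP (z : X) (n : ℕ) : P z n =ᵇ comeagreInterior V (P z n) :=
    (((measurable_inv.smul_const z) (hB n)).baireMeasurableSet).residualEq_comeagreInterior hV
  have hPxy (n : ℕ) : P x n =ᵇ P y n := by
    have : comeagreInterior V (P x n) = comeagreInterior V (P y n) := by
      simp only [comeagreInterior]
      exact iUnion_congr fun i =>
        iUnion_congr_Prop (h n i : IsMeagre (V i \ P x n) ↔ IsMeagre (V i \ P y n)) fun _ => rfl
    exact (hP x n).trans (this ▸ (hP y n).symm)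
  obtain ⟨g, hg⟩ := (dense_of_mem_residual
    (eventually_countable_forall.2 fun n => eventuallyEq_set.1 (hPxy n))).nonempty
  exact MulAction.injective g⁻¹ (hsep _ _ hg)

end VaughtTransform

theorem Continuous.apply_isLocallyConstant {Y α β : Type*} [TopologicalSpace Y]
    [TopologicalSpace β] {f : Y → α → β} {m : Y → α} (hf : Continuous f)
    (hm : IsLocallyConstant m) : Continuous fun y => f y (m y) := by
  refine continuous_iff_continuousAt.2 fun y => ?_
  refine ((continuous_apply (m y)).comp hf).continuousAt.congr ?_
  filter_upwards [hm.eventually_eq y] with z hz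
  simp [hz]

namespace Equiv.Perm

instance : TopologicalSpace (Perm ℕ) := permTopology

theorem isEmbedding_coe_nat : IsEmbedding ((⇑) : Perm ℕ → ℕ → ℕ) :=
  ⟨⟨rfl⟩, DFunLike.coe_injective⟩

theorem isLocallyConstant_apply_nat (n : ℕ) : IsLocallyConstant fun g : Perm ℕ => g n :=
  (IsLocallyConstant.iff_continuous _).2 <|
    (continuous_apply n).comp isEmbedding_coe_nat.continuous

instance : IsTopologicalGroup (Perm ℕ) where
  continuous_mul := isEmbedding_coe_nat.continuous_iff.2 <| continuous_pi fun n =>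
    (isEmbedding_coe_nat.continuous.comp continuous_fst).apply_isLocallyConstant
      ((isLocallyConstant_apply_nat n).comp_continuous continuous_snd)
  continuous_inv := isEmbedding_coe_nat.continuous_iff.2 <| continuous_pi fun n =>
    continuous_discrete_rng.2 fun m => by
      show IsOpen ((fun g : Perm ℕ => g⁻¹ n) ⁻¹' {m})
      have : (fun g : Perm ℕ => g⁻¹ n) ⁻¹' {m} = (fun g : Perm ℕ => g m) ⁻¹' {n} := by
        ext g
        simp [Equiv.eq_symm_apply, eq_comm]
      rw [this]
      exact (isLocallyConstant_apply_nat m).isOpen_fiber n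

theorem isClosedEmbedding_coe_prod_coe_inv :
    IsClosedEmbedding fun g : Perm ℕ => ((⇑g, ⇑g⁻¹) : (ℕ → ℕ) × (ℕ → ℕ)) := by
  have hc : Continuous fun g : Perm ℕ => ((⇑g, ⇑g⁻¹) : (ℕ → ℕ) × (ℕ → ℕ)) :=
    isEmbedding_coe_nat.continuous.prodMk (isEmbedding_coe_nat.continuous.comp continuous_inv)
  refine ⟨⟨.of_comp hc continuous_fst isEmbedding_coe_nat.isInducing,
    fun g h hgh => DFunLike.coe_injective (congrArg Prod.fst hgh)⟩, ?_⟩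
  have : range (fun g : Perm ℕ => ((⇑g, ⇑g⁻¹) : (ℕ → ℕ) × (ℕ → ℕ))) =
      ⋂ n, {p | p.1 (p.2 n) = n} ∩ {p | p.2 (p.1 n) = n} := by
    ext ⟨f, f'⟩
    simp only [mem_range, mem_iInter, mem_inter_iff, mem_ofPred_eq, Prod.mk.injEq]
    refine ⟨?_, fun h => ⟨⟨f, f', fun n => (h n).2, fun n => (h n).1⟩, rfl, rfl⟩⟩
    rintro ⟨g, rfl, rfl⟩ n
    exact ⟨g.apply_symm_apply n, g.symm_apply_apply n⟩
  rw [this]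
  refine isClosed_iInter fun n => .inter (isClosed_eq ?_ continuous_const)
    (isClosed_eq ?_ continuous_const)
  · exact continuous_fst.apply_isLocallyConstant
      ((IsLocallyConstant.iff_continuous _).2 ((continuous_apply n).comp continuous_snd))
  · exact continuous_snd.apply_isLocallyConstant
      ((IsLocallyConstant.iff_continuous _).2 ((continuous_apply n).comp continuous_fst))

instance : PolishSpace (Perm ℕ) := isClosedEmbedding_coe_prod_coe_inv.polishSpace

instance : MeasurableSpace (Perm ℕ) := borel (Perm ℕ)

instance : BorelSpace (Perm ℕ) := ⟨rfl⟩

def cylinder (t : List ℕ) : Set (Perm ℕ) := {g | (List.range t.length).map g = t}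

theorem isLocallyConstant_map_coe (l : List ℕ) : IsLocallyConstant fun g : Perm ℕ => l.map g := by
  induction l with
  | nil => exact IsLocallyConstant.const _
  | cons a l ih => exact (isLocallyConstant_apply_nat a).comp₂ ih List.cons

theorem preimage_coe_piNat_cylinder (g : Perm ℕ) (n : ℕ) :
    (⇑) ⁻¹' PiNat.cylinder (⇑g) n = cylinder ((List.range n).map g) := by
  ext h
  simp [cylinder, PiNat.mem_cylinder_iff, List.map_inj_left]

theorem isTopologicalBasis_range_cylinder : IsTopologicalBasis (range cylinder) := by
  refine isTopologicalBasis_of_isOpen_of_nhds ?_ fun g U hg hU => ?_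
  · rintro _ ⟨t, rfl⟩
    exact (isLocallyConstant_map_coe _).isOpen_fiber t
  obtain ⟨_, ⟨_, ⟨x, n, rfl⟩, rfl⟩, hgx, hxU⟩ :=
    ((PiNat.isTopologicalBasis_cylinders _).isInducing
      isEmbedding_coe_nat.isInducing).exists_subset_of_mem_open hg hU
  rw [mem_preimage, PiNat.mem_cylinder_iff_eq] at hgx
  rw [← hgx, preimage_coe_piNat_cylinder] at hxU
  exact ⟨_, ⟨_, rfl⟩, by simp [cylinder], hxU⟩

open scoped Pointwise in
theorem smul_cylinder (h : Perm ℕ) (t : List ℕ) : h • cylinder t = cylinder (t.map h) := by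
  ext g
  simp only [cylinder, mem_smul_set_iff_inv_smul_mem, mem_ofPred_eq, smul_eq_mul, coe_mul, inv_def]
  rw [← List.map_map, ← (List.map_injective_iff.2 h.injective).eq_iff, List.map_map,
    h.self_comp_symm, List.map_id, List.length_map]

end Equiv.Perm

theorem infAction_one (x : List ℕ → Bool) : infAction 1 x = x := by
  funext s
  simp [infAction]

theorem infAction_mul (g h : Equiv.Perm ℕ) (x : List ℕ → Bool) :
    infAction (g * h) x = infAction g (infAction h x) := by
  funext s
  simp [infAction, mul_inv_rev, List.map_map]

theorem continuous_infAction :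
    Continuous fun p : Equiv.Perm ℕ × (List ℕ → Bool) => infAction p.1 p.2 :=
  continuous_pi fun s => continuous_snd.apply_isLocallyConstant
    ((Equiv.Perm.isLocallyConstant_map_coe s).comp_continuous (continuous_inv.comp continuous_fst))

section VaughtCode

variable {X : Type*} [MulAction (Equiv.Perm ℕ) X]

-- The action preserves only the length of a word `s`, so `Nat.unpair s.length` encodes both the
-- index `n` and the length of the prefix of `s` that names the cylinder.
open Classical in
noncomputable def vaughtCode (B : ℕ → Set X) (x : X) : List ℕ → Bool := fun s =>
  decide (x ∈ vaughtTransform (B s.length.unpair.1)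
    (Equiv.Perm.cylinder (s.take s.length.unpair.2)))

theorem vaughtCode_smul (B : ℕ → Set X) (h : Equiv.Perm ℕ) (x : X) :
    vaughtCode B (h • x) = infAction h (vaughtCode B x) := by
  funext s
  simp only [vaughtCode, infAction, List.length_map, ← List.map_take, decide_eq_decide,
    smul_mem_vaughtTransform_iff, Equiv.Perm.smul_cylinder]

variable [MeasurableSpace X] [MeasurableSMul₂ (Equiv.Perm ℕ) X] {B : ℕ → Set X}

theorem measurable_vaughtCode (hB : ∀ n, MeasurableSet (B n)) : Measurable (vaughtCode B) :=
  measurable_pi_iff.2 fun s => measurable_to_bool <| by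
    convert measurableSet_vaughtTransform Equiv.Perm.isTopologicalBasis_range_cylinder
      (hB s.length.unpair.1) (s.take s.length.unpair.2) using 1
    ext x
    simp [vaughtCode]

theorem vaughtCode_injective (hB : ∀ n, MeasurableSet (B n))
    (hsep : ∀ x y, (∀ n, x ∈ B n ↔ y ∈ B n) → x = y) : Function.Injective (vaughtCode B) := by
  intro x y hxy
  refine eq_of_forall_mem_vaughtTransform_iff Equiv.Perm.isTopologicalBasis_range_cylinder hB
    hsep fun n t => ?_
  obtain ⟨s, hs, hst⟩ : ∃ s : List ℕ, s.length = Nat.pair n t.length ∧ s.take t.length = t :=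
    ⟨t ++ List.replicate (Nat.pair n t.length - t.length) 0, by simp [Nat.right_le_pair], by simp⟩
  simpa [vaughtCode, hs, hst] using congrFun hxy s

end VaughtCode

/-- The action of `S_∞` on the compact space `X_∞ = 2^(ℕ^{<ℕ})` is a
continuous action, and `X_∞` is a universal Borel `S_∞`-space. -/
theorem stmt_15 :
    (∀ x, infAction 1 x = x) ∧
    (∀ g h : Equiv.Perm ℕ, ∀ x, infAction (g * h) x = infAction g (infAction h x)) ∧
    CompactSpace (List ℕ → Bool) ∧
    @Continuous (Equiv.Perm ℕ × (List ℕ → Bool)) (List ℕ → Bool)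
      (@instTopologicalSpaceProd _ _ permTopology inferInstance) inferInstance
      (fun p => infAction p.1 p.2) ∧
    (∀ (X : Type) (mX : MeasurableSpace X), @StandardBorelSpace X mX →
      ∀ a : Equiv.Perm ℕ → X → X,
      (∀ x, a 1 x = x) → (∀ g h x, a (g * h) x = a g (a h x)) →
      @Measurable (Equiv.Perm ℕ × X) X
        (@Prod.instMeasurableSpace _ _ (@borel _ permTopology) mX) mX
        (fun p => a p.1 p.2) →
      ∃ π : X → (List ℕ → Bool), Function.Injective π ∧
        @Measurable X (List ℕ → Bool) mX (borel (List ℕ → Bool)) π ∧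
        ∀ g x, π (a g x) = infAction g (π x)) := by
  refine ⟨infAction_one, infAction_mul, inferInstance, continuous_infAction, ?_⟩
  intro X mX hX a hone hmul hmeas
  let _ : MulAction (Equiv.Perm ℕ) X := { smul := a, one_smul := hone, mul_smul := hmul }
  have : MeasurableSMul₂ (Equiv.Perm ℕ) X := ⟨hmeas⟩
  obtain ⟨B, hB, hsep⟩ := exists_seq_separating X MeasurableSet.empty univ
  refine ⟨vaughtCode B, vaughtCode_injective hB fun x y => hsep x trivial y trivial, ?_,
    vaughtCode_smul B⟩
  rw [← BorelSpace.measurable_eq]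
  exact measurable_vaughtCode hB
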